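/- Let ω_i = f_{i1} dx + f_{i2} dt (i = 1,2,3) be C¹ one-forms on an open subset of ℝ², and define X = (1/2)[[f_{21}, f_{11}-f_{31}],[f_{11}+f_{31}, -f_{21}]] and T = (1/2)[[f_{22}, f_{12}-f_{32}],[f_{12}+f_{32}, -f_{22}]]. Then the structure equations dω₁ = ω₃∧ω₂, dω₂ = ω₁∧ω₃, dω₃ = ω₁∧ω₂ hold if and only if the zero-curvature equation ∂_t X - ∂_x T + [X,T] = 0 holds. -/

import Mathlib

open Matrix

noncomputable def pdx (f : ℝ → ℝ → ℝ) : ℝ → ℝ → ℝ := fun x t => deriv (fun y => f y t) x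
noncomputable def pdt (f : ℝ → ℝ → ℝ) : ℝ → ℝ → ℝ := fun x t => deriv (fun s => f x s) t

noncomputable def pdxM (X : ℝ → ℝ → Matrix (Fin 2) (Fin 2) ℝ) :
    ℝ → ℝ → Matrix (Fin 2) (Fin 2) ℝ :=
  fun x t => Matrix.of fun i j => deriv (fun y => X y t i j) x

noncomputable def pdtM (X : ℝ → ℝ → Matrix (Fin 2) (Fin 2) ℝ) :
    ℝ → ℝ → Matrix (Fin 2) (Fin 2) ℝ :=
  fun x t => Matrix.of fun i j => deriv (fun s => X x s i j) t

/-!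
The matrices `X` and `T` are the images of `(f₂₁, f₁₁, f₃₁)` and `(f₂₂, f₁₂, f₃₂)` under a linear
isomorphism `ℝ³ ≃ sl(2,ℝ)` which carries the Lorentzian cross product of `so(2,1)` to the
commutator. Differentiation commutes with this linear map, so the zero-curvature equation is the
image of the vector of the three structure equations, and it vanishes iff each of them holds.
-/

/-- `a e₁ + b e₂ + c e₃` for the basis `e₁ = ½ diag(1,-1)`, `e₂ = ½ [[0,1],[1,0]]`,
`e₃ = ½ [[0,-1],[1,0]]` of `sl(2,ℝ)`, in which `[e₂,e₃] = e₁`, `[e₃,e₁] = e₂`, `[e₁,e₂] = -e₃`. -/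
noncomputable def triadMatrix (a b c : ℝ) : Matrix (Fin 2) (Fin 2) ℝ :=
  (1/2 : ℝ) • !![a, b - c; b + c, -a]

lemma triadMatrix_def (a b c : ℝ) :
    triadMatrix a b c = (1/2 : ℝ) • !![a, b - c; b + c, -a] := rfl

lemma triadMatrix_add (a b c a' b' c' : ℝ) :
    triadMatrix a b c + triadMatrix a' b' c' = triadMatrix (a + a') (b + b') (c + c') := by
  ext i j
  fin_cases i <;> fin_cases j <;> simp [triadMatrix] <;> ring

lemma triadMatrix_sub (a b c a' b' c' : ℝ) :
    triadMatrix a b c - triadMatrix a' b' c' = triadMatrix (a - a') (b - b') (c - c') := by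
  ext i j
  fin_cases i <;> fin_cases j <;> simp [triadMatrix] <;> ring

lemma triadMatrix_eq_zero_iff (a b c : ℝ) : triadMatrix a b c = 0 ↔ a = 0 ∧ b = 0 ∧ c = 0 := by
  constructor
  · intro h
    have h00 := congrFun (congrFun h 0) 0
    have h01 := congrFun (congrFun h 0) 1
    have h10 := congrFun (congrFun h 1) 0
    simp only [triadMatrix, Matrix.smul_apply, Matrix.zero_apply, of_apply, cons_val', cons_val_zero,
      cons_val_one, cons_val_fin_one, smul_eq_mul] at h00 h01 h10
    refine ⟨?_, ?_, ?_⟩ <;> linarith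
  · rintro ⟨rfl, rfl, rfl⟩
    ext i j; fin_cases i <;> fin_cases j <;> simp [triadMatrix]

lemma triadMatrix_mul_sub_mul (a b c a' b' c' : ℝ) :
    triadMatrix a b c * triadMatrix a' b' c' - triadMatrix a' b' c' * triadMatrix a b c
      = triadMatrix (b * c' - c * b') (c * a' - a * c') (b * a' - a * b') := by
  ext i j
  fin_cases i <;> fin_cases j <;> simp [triadMatrix] <;> ring

lemma of_deriv_triadMatrix {u v w : ℝ → ℝ} {s : ℝ}
    (hv : DifferentiableAt ℝ v s) (hw : DifferentiableAt ℝ w s) :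
    Matrix.of (fun i j => deriv (fun r => triadMatrix (u r) (v r) (w r) i j) s)
      = triadMatrix (deriv u s) (deriv v s) (deriv w s) := by
  ext i j
  fin_cases i <;> fin_cases j <;>
    simp [triadMatrix, deriv_const_mul_field', deriv_fun_sub hv hw, deriv_fun_add hv hw]

lemma differentiableAt_partial_fst {f : ℝ → ℝ → ℝ} {x t : ℝ}
    (hf : DifferentiableAt ℝ (Function.uncurry f) (x, t)) :
    DifferentiableAt ℝ (fun y => f y t) x :=
  hf.comp (f := fun y => (y, t)) x (by fun_prop)

lemma differentiableAt_partial_snd {f : ℝ → ℝ → ℝ} {x t : ℝ}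
    (hf : DifferentiableAt ℝ (Function.uncurry f) (x, t)) :
    DifferentiableAt ℝ (fun s => f x s) t :=
  hf.comp (f := fun s => (x, s)) t (by fun_prop)

lemma pdxM_triadMatrix {g₁ g₂ g₃ : ℝ → ℝ → ℝ} {x t : ℝ}
    (h₂ : DifferentiableAt ℝ (Function.uncurry g₂) (x, t))
    (h₃ : DifferentiableAt ℝ (Function.uncurry g₃) (x, t)) :
    pdxM (fun a b => triadMatrix (g₁ a b) (g₂ a b) (g₃ a b)) x t
      = triadMatrix (pdx g₁ x t) (pdx g₂ x t) (pdx g₃ x t) :=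
  of_deriv_triadMatrix (differentiableAt_partial_fst h₂) (differentiableAt_partial_fst h₃)

lemma pdtM_triadMatrix {g₁ g₂ g₃ : ℝ → ℝ → ℝ} {x t : ℝ}
    (h₂ : DifferentiableAt ℝ (Function.uncurry g₂) (x, t))
    (h₃ : DifferentiableAt ℝ (Function.uncurry g₃) (x, t)) :
    pdtM (fun a b => triadMatrix (g₁ a b) (g₂ a b) (g₃ a b)) x t
      = triadMatrix (pdt g₁ x t) (pdt g₂ x t) (pdt g₃ x t) :=
  of_deriv_triadMatrix (differentiableAt_partial_snd h₂) (differentiableAt_partial_snd h₃)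

theorem structure_equations_iff_ZCR_general
    (f11 f12 f21 f22 f31 f32 : ℝ → ℝ → ℝ)
    (h11 : ContDiff ℝ 1 (Function.uncurry f11)) (h12 : ContDiff ℝ 1 (Function.uncurry f12))
    (h31 : ContDiff ℝ 1 (Function.uncurry f31)) (h32 : ContDiff ℝ 1 (Function.uncurry f32)) :
    ((∀ x t : ℝ,
        pdx f12 x t - pdt f11 x t = f31 x t * f22 x t - f32 x t * f21 x t ∧
        pdx f22 x t - pdt f21 x t = f11 x t * f32 x t - f12 x t * f31 x t ∧
        pdx f32 x t - pdt f31 x t = f11 x t * f22 x t - f12 x t * f21 x t)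
      ↔
      (∀ x t : ℝ,
        pdtM (fun a b => (1/2 : ℝ) •
            !![f21 a b, f11 a b - f31 a b; f11 a b + f31 a b, -f21 a b]) x t
          - pdxM (fun a b => (1/2 : ℝ) •
            !![f22 a b, f12 a b - f32 a b; f12 a b + f32 a b, -f22 a b]) x t
          + (((1/2 : ℝ) •
                !![f21 x t, f11 x t - f31 x t; f11 x t + f31 x t, -f21 x t])
              * ((1/2 : ℝ) •
                !![f22 x t, f12 x t - f32 x t; f12 x t + f32 x t, -f22 x t])
            - ((1/2 : ℝ) •
                !![f22 x t, f12 x t - f32 x t; f12 x t + f32 x t, -f22 x t])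
              * ((1/2 : ℝ) •
                !![f21 x t, f11 x t - f31 x t; f11 x t + f31 x t, -f21 x t]))
          = 0)) := by
  refine forall₂_congr fun x t => ?_
  have hd {f : ℝ → ℝ → ℝ} (hf : ContDiff ℝ 1 (Function.uncurry f)) :
      DifferentiableAt ℝ (Function.uncurry f) (x, t) :=
    hf.differentiable one_ne_zero (x, t)
  simp only [← triadMatrix_def]
  rw [pdtM_triadMatrix (hd h11) (hd h31), pdxM_triadMatrix (hd h12) (hd h32),
    triadMatrix_mul_sub_mul, triadMatrix_sub, triadMatrix_add, triadMatrix_eq_zero_iff]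
  constructor <;> rintro ⟨e₁, e₂, e₃⟩ <;> refine ⟨?_, ?_, ?_⟩ <;> linarith

/-- Equivalence between the pseudospherical structure equations for the triad
`ωᵢ = f_{i1} dx + f_{i2} dt` and the `sl(2,ℝ)` zero-curvature equation
`∂ₜX - ∂ₓT + [X,T] = 0` for the associated matrices `X, T`. -/
theorem structure_equations_iff_ZCR
    (f11 f12 f21 f22 f31 f32 : ℝ → ℝ → ℝ)
    (h11 : ContDiff ℝ 1 (Function.uncurry f11)) (h12 : ContDiff ℝ 1 (Function.uncurry f12))
    (h21 : ContDiff ℝ 1 (Function.uncurry f21)) (h22 : ContDiff ℝ 1 (Function.uncurry f22))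
    (h31 : ContDiff ℝ 1 (Function.uncurry f31)) (h32 : ContDiff ℝ 1 (Function.uncurry f32)) :
    ((∀ x t : ℝ,
        pdx f12 x t - pdt f11 x t = f31 x t * f22 x t - f32 x t * f21 x t ∧
        pdx f22 x t - pdt f21 x t = f11 x t * f32 x t - f12 x t * f31 x t ∧
        pdx f32 x t - pdt f31 x t = f11 x t * f22 x t - f12 x t * f21 x t)
      ↔
      (∀ x t : ℝ,
        pdtM (fun a b => (1/2 : ℝ) •
            !![f21 a b, f11 a b - f31 a b; f11 a b + f31 a b, -f21 a b]) x t
          - pdxM (fun a b => (1/2 : ℝ) •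
            !![f22 a b, f12 a b - f32 a b; f12 a b + f32 a b, -f22 a b]) x t
          + (((1/2 : ℝ) •
                !![f21 x t, f11 x t - f31 x t; f11 x t + f31 x t, -f21 x t])
              * ((1/2 : ℝ) •
                !![f22 x t, f12 x t - f32 x t; f12 x t + f32 x t, -f22 x t])
            - ((1/2 : ℝ) •
                !![f22 x t, f12 x t - f32 x t; f12 x t + f32 x t, -f22 x t])
              * ((1/2 : ℝ) •
                !![f21 x t, f11 x t - f31 x t; f11 x t + f31 x t, -f21 x t]))
          = 0)) :=
  structure_equations_iff_ZCR_general f11 f12 f21 f22 f31 f32 h11 h12 h31 h32
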